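/- arXiv:1201.0894 — 5 statements merged into one kernel-verified Lean document; each statement's English description precedes it below -/
import Mathlib

section
/- The map φ_N(x,y) = (x(y+1)^{N-1}, y/(y+1)) satisfies the projective translation equation (1-z)·φ(x,y) = φ(φ(xz,yz)·(1-z)/z) for all integers N, wherever both sides are defined. -/
/-- The canonical flow of level `N`: `φ_N(x,y) = (x(y+1)^{N-1}, y/(y+1))`. -/
noncomputable def phiN (N : ℤ) (p : ℝ × ℝ) : ℝ × ℝ :=
  (p.1 * (p.2 + 1) ^ (N - 1), p.2 / (p.2 + 1))

/-- `φ_N` satisfies the projective translation equation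
`(1-z)·φ(x,y) = φ(φ(xz,yz)·(1-z)/z)` wherever both sides are defined. -/
theorem phiN_satisfies_PTE (N : ℤ) (x y z : ℝ)
    (hz : z ≠ 0) (hy : y + 1 ≠ 0) (hyz : y * z + 1 ≠ 0) :
    (1 - z) • phiN N (x, y) = phiN N (((1 - z) / z) • phiN N (z • (x, y))) := by
  have hzy : z * y + 1 ≠ 0 := by rw [mul_comm]; exact hyz
  simp only [phiN, Prod.smul_mk, smul_eq_mul, Prod.mk.injEq]
  have key : (1 - z) / z * (z * y / (z * y + 1)) + 1 = (y + 1) / (z * y + 1) := by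
    field_simp
    ring
  refine ⟨?_, ?_⟩
  · rw [key, div_zpow]
    have h1 : (z * y + 1) ^ (N - 1) ≠ 0 := zpow_ne_zero _ hzy
    field_simp
  · rw [key]
    field_simp
end

section
/- For any 1-homogeneous rational function J(x,y), the map φ(x,y) = (x/(1−J(x,y)), y/(1−J(x,y))) satisfies the projective translation equation. -/
/-- The level-0 flow associated with a 1-homogeneous function `J`. -/
noncomputable def phiJ (J : ℝ × ℝ → ℝ) (p : ℝ × ℝ) : ℝ × ℝ :=
  (1 / (1 - J p)) • p

/-- For any 1-homogeneous rational `J`, the map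
`(x,y) ↦ (x/(1−J(x,y)), y/(1−J(x,y)))` satisfies the projective translation
equation wherever defined. -/
theorem level_zero_flow_satisfies_PTE
    (J : ℝ × ℝ → ℝ)
    (hJ : ∀ (a : ℝ) (p : ℝ × ℝ), a ≠ 0 → J (a • p) = a * J p) :
    ∀ (p : ℝ × ℝ) (z : ℝ), z ≠ 0 → 1 - J p ≠ 0 → 1 - z * J p ≠ 0 →
      (1 - z) • phiJ J p = phiJ J (((1 - z) / z) • phiJ J (z • p)) := by
  intro p z hz h1 h2
  have hJz : J (z • p) = z * J p := hJ z p hz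
  by_cases hz1 : z = 1
  · subst hz1
    simp [phiJ, hJz]
  have h1z : (1 : ℝ) - z ≠ 0 := sub_ne_zero.mpr (fun h => hz1 h.symm)
  have key : ((1 - z) / z) • phiJ J (z • p) = ((1 - z) / (1 - z * J p)) • p := by
    simp only [phiJ, hJz, smul_smul]
    congr 1
    field_simp
  rw [key]
  have ha : (1 - z) / (1 - z * J p) ≠ 0 := div_ne_zero h1z h2
  have hJa : J (((1 - z) / (1 - z * J p)) • p) = ((1 - z) / (1 - z * J p)) * J p :=
    hJ _ p ha
  have hden : 1 - (1 - z) / (1 - z * J p) * J p = (1 - J p) / (1 - z * J p) := by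
    field_simp
    ring
  simp only [phiJ, hJa, smul_smul, hden]
  congr 1
  rw [one_div_div]
  field_simp
end

section
/- The map i(x,y) = (y²/x, y) is an involution, and conjugation by i sends the canonical flow φ_N to φ_{−N}: i ∘ φ_N ∘ i = φ_{−N} for every integer N. -/
/-- The involution `i(x,y) = (y²/x, y)`. -/
noncomputable def inv0 (p : ℝ × ℝ) : ℝ × ℝ :=
  (p.2 ^ 2 / p.1, p.2)

theorem inv0_inv0 {p : ℝ × ℝ} (hy : p.2 ≠ 0) : inv0 (inv0 p) = p :=
  Prod.ext (div_div_cancel₀ (pow_ne_zero 2 hy)) rfl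

theorem inv0_phiN_inv0 (N : ℤ) {p : ℝ × ℝ} (hy : p.2 ≠ 0) (hy1 : p.2 + 1 ≠ 0) :
    inv0 (phiN N (inv0 p)) = phiN (-N) p := by
  obtain ⟨x, y⟩ := p
  have hexp : (y + 1) ^ (-N - 1) = ((y + 1) ^ 2 * (y + 1) ^ (N - 1))⁻¹ := by
    rw [← zpow_natCast, ← zpow_add₀ hy1, ← zpow_neg]
    ring_nf
  refine Prod.ext ?_ rfl
  simp only [inv0, phiN, hexp]
  field_simp

theorem involution_conjugates_phiN_general (N : ℤ) (x y : ℝ)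
    (hy : y ≠ 0) (hy1 : y + 1 ≠ 0) :
    inv0 (inv0 (x, y)) = (x, y) ∧
    inv0 (phiN N (inv0 (x, y))) = phiN (-N) (x, y) :=
  ⟨inv0_inv0 hy, inv0_phiN_inv0 N hy hy1⟩

/-- `i(x,y) = (y²/x, y)` is an involution and conjugation by it sends `φ_N` to
`φ_{−N}`, wherever defined. -/
theorem involution_conjugates_phiN (N : ℤ) (x y : ℝ)
    (hx : x ≠ 0) (hy : y ≠ 0) (hy1 : y + 1 ≠ 0) :
    inv0 (inv0 (x, y)) = (x, y) ∧
    inv0 (phiN N (inv0 (x, y))) = phiN (-N) (x, y) :=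
  involution_conjugates_phiN_general N x y hy hy1
end

section
/- If a flow φ has orbits given by 𝒲(u,v) = const for a homogeneous rational function 𝒲 of degree N, and ℓ_{P,Q}(x,y) = (xP/Q, yP/Q) with P,Q homogeneous of equal degree, then the orbits of ℓ_{P,Q}⁻¹ ∘ φ ∘ ℓ_{P,Q} are given by (P(u,v)/Q(u,v))^N · 𝒲(u,v) = const. -/
/-- The projective translation equation for `φ : ℝ² → ℝ²`. -/
def IsPTE (φ : ℝ × ℝ → ℝ × ℝ) : Prop :=
  ∀ (p : ℝ × ℝ) (z : ℝ), (1 - z) • φ p = φ (((1 - z) / z) • φ (z • p))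

/-- If the orbits of a flow `φ` lie on level sets of a degree-`N` homogeneous
rational function `𝒲`, then the orbits of `ℓ_{P,Q}⁻¹ ∘ φ ∘ ℓ_{P,Q}` lie on
level sets of `(P/Q)^N · 𝒲`. -/
theorem orbit_invariant_conjugation
    (N d : ℕ) (φ m : ℝ × ℝ → ℝ × ℝ) (W P Q : ℝ × ℝ → ℝ)
    (hφ : IsPTE φ)
    (hW : ∀ (a : ℝ) (p : ℝ × ℝ), a ≠ 0 → W (a • p) = a ^ N * W p)
    (hP : ∀ (a : ℝ) (p : ℝ × ℝ), P (a • p) = a ^ d * P p)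
    (hQ : ∀ (a : ℝ) (p : ℝ × ℝ), Q (a • p) = a ^ d * Q p)
    (hlm : Function.LeftInverse m (fun p : ℝ × ℝ => (P p / Q p) • p))
    (hml : Function.RightInverse m (fun p : ℝ × ℝ => (P p / Q p) • p))
    (hmhom : ∀ (a : ℝ) (p : ℝ × ℝ), a ≠ 0 → m (a • p) = a • m p)
    (horb : ∀ (p : ℝ × ℝ) (z : ℝ), z ≠ 0 → W (z⁻¹ • φ (z • p)) = W p) :
    ∀ (p : ℝ × ℝ) (z : ℝ), z ≠ 0 → P p ≠ 0 → Q p ≠ 0 →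
      (fun q : ℝ × ℝ => (P q / Q q) ^ N * W q)
          (z⁻¹ • m (φ (z • ((P p / Q p) • p))))
        = (P p / Q p) ^ N * W p := by
  intro p z hz hPp hQp
  have hcp : P p / Q p ≠ 0 := div_ne_zero hPp hQp
  -- homogeneity of ℓ of degree 1
  have lhom : ∀ (a : ℝ) (r : ℝ × ℝ), a ≠ 0 →
      (P (a • r) / Q (a • r)) • (a • r) = a • ((P r / Q r) • r) := by
    intro a r ha
    rw [hP, hQ, mul_div_mul_left _ _ (pow_ne_zero d ha), smul_comm]
  set q : ℝ × ℝ := z⁻¹ • m (φ (z • ((P p / Q p) • p))) with hq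
  have hLq : (P q / Q q) • q = z⁻¹ • φ (z • ((P p / Q p) • p)) := by
    rw [hq, lhom _ _ (inv_ne_zero hz),
      show ∀ x, (P (m x) / Q (m x)) • m x = x from hml]
  have hWq : W ((P q / Q q) • q) = (P p / Q p) ^ N * W p := by
    rw [hLq, horb _ _ hz, hW _ _ hcp]
  simp only
  by_cases hc : P q / Q q = 0
  · -- then ℓ q = 0, hence q = 0
    have hLq0 : (P q / Q q) • q = (0 : ℝ × ℝ) := by rw [hc, zero_smul]
    have hm0 : m (0 : ℝ × ℝ) = 0 := by
      have := hlm (0 : ℝ × ℝ)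
      simpa using this
    have hq0 : q = 0 := by
      have := hlm q
      simp only at this
      rw [hLq0, hm0] at this
      exact this.symm
    rw [← hWq, hLq0, hc]
    rcases Nat.eq_zero_or_pos N with hN | hN
    · simp [hN, hq0]
    · rw [zero_pow hN.ne', hq0]
      have h2 := hW 2 (0 : ℝ × ℝ) two_ne_zero
      rw [smul_zero] at h2
      have h2N : (2 : ℝ) ^ N ≥ 2 := by
        calc (2 : ℝ) ^ N ≥ 2 ^ 1 := by
              apply pow_le_pow_right₀ (by norm_num) hN
        _ = 2 := pow_one 2
      nlinarith [h2, h2N]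
  · rw [← hWq, hW _ _ hc]
end

section
/- For W ≠ 0 and (V+1)² − 4UW = N² with N a positive integer and roots w₀ ≠ w₁ of Ww² + (V+1)w + U with w₀ − w₁ = N/W, the map u(x,y) = [(y+1)^N(y−w₁x) − (y−w₀x)] / [(y+1)^N(y−w₁x)w₀ − (y−w₀x)w₁] · y/(y+1), v(x,y) = y/(y+1), defines a projective flow whose vector field is (Ux² + Vxy + Wy², −y²). -/
open Filter

/-- First coordinate of the level-`N` univariate flow with parameters `w₀, w₁`. -/
noncomputable def uW (N : ℕ) (w₀ w₁ : ℝ) (p : ℝ × ℝ) : ℝ :=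
  (((p.2 + 1) ^ N * (p.2 - w₁ * p.1) - (p.2 - w₀ * p.1)) /
      ((p.2 + 1) ^ N * (p.2 - w₁ * p.1) * w₀ - (p.2 - w₀ * p.1) * w₁)) *
    (p.2 / (p.2 + 1))

/-- The level-`N` univariate flow with parameters `w₀, w₁`. -/
noncomputable def phiW (N : ℕ) (w₀ w₁ : ℝ) (p : ℝ × ℝ) : ℝ × ℝ :=
  (uW N w₀ w₁ p, p.2 / (p.2 + 1))

/-- The denominator appearing in `uW`. -/
noncomputable def denW (N : ℕ) (w₀ w₁ : ℝ) (p : ℝ × ℝ) : ℝ :=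
  (p.2 + 1) ^ N * (p.2 - w₁ * p.1) * w₀ - (p.2 - w₀ * p.1) * w₁

/-!
Write `a = y - w₀ x` and `b = y - w₁ x`. The map `phiW` sends `y` to `y / (y + 1)` and multiplies
the ratio `b / a` by `(y + 1) ^ N`. For `q = ((1 - z) / z) • phiW (z • p)` this gives
`q.2 + 1 = (y + 1) / (z y + 1)` and ratio `(z y + 1) ^ N b / a`, so the numerator and denominator
of `uW` at `q` are one common multiple of those at `p`: that is the flow equation.
The vector field is the derivative at `z = 0` of `z ↦ z⁻¹ • phiW (z • p)`, which after cancelling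
`z` is a rational function regular at `0`; Vieta's formulas for `w₀, w₁` and `N = W (w₀ - w₁)`
turn that derivative into `(U x² + V x y + W y², -y²)`.
-/

namespace UnivariateFlow

variable {N : ℕ} {w₀ w₁ : ℝ}

noncomputable def numW (N : ℕ) (w₀ w₁ : ℝ) (p : ℝ × ℝ) : ℝ :=
  (p.2 + 1) ^ N * (p.2 - w₁ * p.1) - (p.2 - w₀ * p.1)

theorem uW_eq (p : ℝ × ℝ) :
    uW N w₀ w₁ p = numW N w₀ w₁ p / denW N w₀ w₁ p * (p.2 / (p.2 + 1)) := rfl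

theorem phiW_snd_sub_mul_fst {p : ℝ × ℝ} (hden : denW N w₀ w₁ p ≠ 0) (w : ℝ) :
    (phiW N w₀ w₁ p).2 - w * (phiW N w₀ w₁ p).1 =
      p.2 / (p.2 + 1) * ((p.2 + 1) ^ N * (p.2 - w₁ * p.1) * (w₀ - w) -
        (p.2 - w₀ * p.1) * (w₁ - w)) / denW N w₀ w₁ p := by
  simp only [phiW, uW_eq, numW]
  field_simp
  rw [denW]
  ring

theorem phiW_flow {p : ℝ × ℝ} {z : ℝ} (hz : z ≠ 0) (ht : (z • p).2 + 1 ≠ 0)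
    (hden : denW N w₀ w₁ (z • p) ≠ 0)
    (hden' : denW N w₀ w₁ (((1 - z) / z) • phiW N w₀ w₁ (z • p)) ≠ 0) :
    (1 - z) • phiW N w₀ w₁ p = phiW N w₀ w₁ (((1 - z) / z) • phiW N w₀ w₁ (z • p)) := by
  obtain ⟨x, y⟩ := p
  simp only [Prod.smul_mk, smul_eq_mul] at ht hden hden' ⊢
  set q := ((1 - z) / z) • phiW N w₀ w₁ (z * x, z * y) with hq
  set c := (1 - z) * (w₀ - w₁) * (z * y / (z * y + 1)) / denW N w₀ w₁ (z * x, z * y)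
    with hc_def
  have hq2 : q.2 = (1 - z) * y / (z * y + 1) := by
    simp only [hq, phiW, Prod.smul_snd, smul_eq_mul]
    field_simp
  have hq2_add_one : q.2 + 1 = (y + 1) / (z * y + 1) := by
    rw [hq2]
    field_simp
    ring
  have hv : q.2 / (q.2 + 1) = (1 - z) * (y / (y + 1)) := by
    rw [hq2_add_one, hq2, div_div_div_cancel_right₀ ht, mul_div_assoc]
  have ha : q.2 - w₀ * q.1 = c * (y - w₀ * x) := by
    simp only [hq, Prod.smul_fst, Prod.smul_snd, smul_eq_mul, mul_left_comm _ ((1 - z) / z),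
      ← mul_sub, phiW_snd_sub_mul_fst hden, hc_def]
    field_simp
    ring
  have hb : q.2 - w₁ * q.1 = c * ((z * y + 1) ^ N * (y - w₁ * x)) := by
    simp only [hq, Prod.smul_fst, Prod.smul_snd, smul_eq_mul, mul_left_comm _ ((1 - z) / z),
      ← mul_sub, phiW_snd_sub_mul_fst hden, hc_def]
    field_simp
    ring
  have hpow : ((y + 1) / (z * y + 1)) ^ N * (z * y + 1) ^ N = (y + 1) ^ N := by
    rw [div_pow, div_mul_cancel₀ _ (pow_ne_zero _ ht)]
  have hnum : numW N w₀ w₁ q = c * numW N w₀ w₁ (x, y) := by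
    rw [numW, numW, hq2_add_one, ha, hb]
    linear_combination c * (y - w₁ * x) * hpow
  have hdenq : denW N w₀ w₁ q = c * denW N w₀ w₁ (x, y) := by
    rw [denW, denW, hq2_add_one, ha, hb]
    linear_combination c * (y - w₁ * x) * w₀ * hpow
  have hc : c ≠ 0 := left_ne_zero_of_mul (hdenq ▸ hden')
  refine Prod.ext ?_ hv.symm
  simp only [phiW, Prod.smul_fst, smul_eq_mul]
  rw [uW_eq, uW_eq q, hnum, hdenq, hv, mul_div_mul_left _ _ hc]
  ring

/-- `z⁻¹ • phiW N w₀ w₁ (z • p)` with the factor `z` cancelled, hence also defined at `z = 0`. -/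
noncomputable def dilatedPhiW (N : ℕ) (w₀ w₁ : ℝ) (p : ℝ × ℝ) (z : ℝ) : ℝ × ℝ :=
  (((z * p.2 + 1) ^ N * (p.2 - w₁ * p.1) - (p.2 - w₀ * p.1)) * p.2 /
      (((z * p.2 + 1) ^ N * (p.2 - w₁ * p.1) * w₀ - (p.2 - w₀ * p.1) * w₁) * (z * p.2 + 1)),
    p.2 / (z * p.2 + 1))

theorem inv_smul_phiW_smul (p : ℝ × ℝ) {z : ℝ} (hz : z ≠ 0) :
    z⁻¹ • phiW N w₀ w₁ (z • p) = dilatedPhiW N w₀ w₁ p z := by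
  obtain ⟨x, y⟩ := p
  refine Prod.ext ?_ ?_
  · simp only [phiW, uW, dilatedPhiW, Prod.smul_mk, smul_eq_mul]
    rw [show (z * y + 1) ^ N * (z * y - w₁ * (z * x)) - (z * y - w₀ * (z * x))
          = z * ((z * y + 1) ^ N * (y - w₁ * x) - (y - w₀ * x)) by ring,
        show (z * y + 1) ^ N * (z * y - w₁ * (z * x)) * w₀ - (z * y - w₀ * (z * x)) * w₁
          = z * ((z * y + 1) ^ N * (y - w₁ * x) * w₀ - (y - w₀ * x) * w₁) by ring,
        mul_div_mul_left _ _ hz]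
    field_simp
  · simp only [phiW, dilatedPhiW, Prod.smul_mk, smul_eq_mul]
    field_simp

theorem dilatedPhiW_zero {p : ℝ × ℝ} (hw : w₀ ≠ w₁) (hy : p.2 ≠ 0) :
    dilatedPhiW N w₀ w₁ p 0 = p := by
  obtain ⟨x, y⟩ := p
  have hw' : w₀ - w₁ ≠ 0 := sub_ne_zero.mpr hw
  refine Prod.ext ?_ ?_
  · simp only [dilatedPhiW, zero_mul, zero_add, one_pow, one_mul, mul_one]
    rw [show (y - w₁ * x) * w₀ - (y - w₀ * x) * w₁ = (w₀ - w₁) * y by ring]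
    field_simp
    ring
  · simp [dilatedPhiW]

theorem hasDerivAt_dilatedPhiW {p : ℝ × ℝ} (hw : w₀ ≠ w₁) (hy : p.2 ≠ 0) :
    HasDerivAt (dilatedPhiW N w₀ w₁ p)
      (N / (w₀ - w₁) * (p.2 - w₀ * p.1) * (p.2 - w₁ * p.1) - p.1 * p.2, -p.2 ^ 2) 0 := by
  obtain ⟨x, y⟩ := p
  have hw' : w₀ - w₁ ≠ 0 := sub_ne_zero.mpr hw
  have ht : HasDerivAt (fun z : ℝ => z * y + 1) y 0 := by
    simpa using ((hasDerivAt_id (0 : ℝ)).mul_const y).add_const 1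
  have htN := ht.fun_pow N
  have hnum := ((htN.mul_const (y - w₁ * x)).sub_const (y - w₀ * x)).mul_const y
  have hden := (((htN.mul_const (y - w₁ * x)).mul_const w₀).sub_const
    ((y - w₀ * x) * w₁)).fun_mul ht
  have hden0 : ((0 * y + 1) ^ N * (y - w₁ * x) * w₀ - (y - w₀ * x) * w₁) * (0 * y + 1) ≠ 0 := by
    rw [show ((0 * y + 1) ^ N * (y - w₁ * x) * w₀ - (y - w₀ * x) * w₁) * (0 * y + 1)
      = (w₀ - w₁) * y by ring]
    exact mul_ne_zero hw' hy
  convert (hnum.fun_div hden hden0).prodMk ((hasDerivAt_const 0 y).fun_div ht (by simp)) using 1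
  · rfl
  simp only [zero_mul, zero_add, one_pow, mul_one, one_mul, Prod.mk.injEq]
  rw [show (y - w₁ * x) * w₀ - (y - w₀ * x) * w₁ = (w₀ - w₁) * y by ring]
  constructor
  · field_simp
    ring
  · ring

theorem tendsto_phiW_vectorField {p : ℝ × ℝ} (hw : w₀ ≠ w₁) (hy : p.2 ≠ 0) :
    Tendsto (fun z : ℝ => z⁻¹ • (z⁻¹ • phiW N w₀ w₁ (z • p) - p)) (nhdsWithin 0 {0}ᶜ)
      (nhds (N / (w₀ - w₁) * (p.2 - w₀ * p.1) * (p.2 - w₁ * p.1) - p.1 * p.2, -p.2 ^ 2)) := by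
  have h := hasDerivAt_iff_tendsto_slope_zero.mp (hasDerivAt_dilatedPhiW (N := N) hw hy)
  simp only [zero_add, dilatedPhiW_zero hw hy] at h
  refine h.congr' ?_
  filter_upwards [self_mem_nhdsWithin] with z hz
  rw [inv_smul_phiW_smul p hz]

theorem vieta_of_roots {U V W w₀ w₁ : ℝ} (hw : w₀ ≠ w₁)
    (hr0 : W * w₀ ^ 2 + (V + 1) * w₀ + U = 0) (hr1 : W * w₁ ^ 2 + (V + 1) * w₁ + U = 0) :
    W * (w₀ + w₁) = -(V + 1) ∧ W * (w₀ * w₁) = U := by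
  have hsum : W * (w₀ + w₁) + (V + 1) = 0 := by
    refine (mul_eq_zero.mp ?_).resolve_left (sub_ne_zero.mpr hw)
    linear_combination hr0 - hr1
  exact ⟨by linear_combination hsum, by linear_combination w₀ * hsum - hr0⟩

end UnivariateFlow

theorem univariate_flow_of_quadratic_field_general
    (U V W : ℝ) (hW : W ≠ 0) (N : ℕ) (hN : 0 < N)
    (w₀ w₁ : ℝ)
    (hr0 : W * w₀ ^ 2 + (V + 1) * w₀ + U = 0)
    (hr1 : W * w₁ ^ 2 + (V + 1) * w₁ + U = 0)
    (hwd : w₀ - w₁ = (N : ℝ) / W) :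
    (∀ p : ℝ × ℝ, p.2 ≠ 0 →
      Tendsto (fun z : ℝ => z⁻¹ • (z⁻¹ • phiW N w₀ w₁ (z • p) - p))
        (nhdsWithin 0 {0}ᶜ)
        (nhds (U * p.1 ^ 2 + V * p.1 * p.2 + W * p.2 ^ 2, -p.2 ^ 2))) ∧
    (∀ (p : ℝ × ℝ) (z : ℝ), z ≠ 0 →
      p.2 + 1 ≠ 0 → denW N w₀ w₁ p ≠ 0 →
      (z • p).2 + 1 ≠ 0 → denW N w₀ w₁ (z • p) ≠ 0 →
      (((1 - z) / z) • phiW N w₀ w₁ (z • p)).2 + 1 ≠ 0 →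
      denW N w₀ w₁ (((1 - z) / z) • phiW N w₀ w₁ (z • p)) ≠ 0 →
      (1 - z) • phiW N w₀ w₁ p
        = phiW N w₀ w₁ (((1 - z) / z) • phiW N w₀ w₁ (z • p))) := by
  have hw : w₀ ≠ w₁ := sub_ne_zero.mp (hwd ▸ div_ne_zero (Nat.cast_ne_zero.mpr hN.ne') hW)
  obtain ⟨hsum, hprod⟩ := UnivariateFlow.vieta_of_roots hw hr0 hr1
  have hNW : (N : ℝ) / (w₀ - w₁) = W := by
    rw [hwd]
    field_simp
  refine ⟨fun p hy => ?_, fun p z hz _ _ ht hden _ hden' =>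
    UnivariateFlow.phiW_flow hz ht hden hden'⟩
  convert UnivariateFlow.tendsto_phiW_vectorField hw hy using 3
  rw [hNW]
  linear_combination p.1 * p.2 * hsum - p.1 ^ 2 * hprod

/-- For `W ≠ 0`, discriminant `(V+1)² − 4UW = N²` and roots `w₀, w₁` of
`Ww² + (V+1)w + U` with `w₀ − w₁ = N/W`, the map
`(x,y) ↦ (uW(x,y), y/(y+1))` is a projective flow with vector field
`(Ux² + Vxy + Wy², −y²)`. -/
theorem univariate_flow_of_quadratic_field
    (U V W : ℝ) (hW : W ≠ 0) (N : ℕ) (hN : 0 < N)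
    (hdisc : (V + 1) ^ 2 - 4 * U * W = (N : ℝ) ^ 2)
    (w₀ w₁ : ℝ)
    (hr0 : W * w₀ ^ 2 + (V + 1) * w₀ + U = 0)
    (hr1 : W * w₁ ^ 2 + (V + 1) * w₁ + U = 0)
    (hwd : w₀ - w₁ = (N : ℝ) / W) :
    (∀ p : ℝ × ℝ, p.2 ≠ 0 →
      Tendsto (fun z : ℝ => z⁻¹ • (z⁻¹ • phiW N w₀ w₁ (z • p) - p))
        (nhdsWithin 0 {0}ᶜ)
        (nhds (U * p.1 ^ 2 + V * p.1 * p.2 + W * p.2 ^ 2, -p.2 ^ 2))) ∧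
    (∀ (p : ℝ × ℝ) (z : ℝ), z ≠ 0 →
      p.2 + 1 ≠ 0 → denW N w₀ w₁ p ≠ 0 →
      (z • p).2 + 1 ≠ 0 → denW N w₀ w₁ (z • p) ≠ 0 →
      (((1 - z) / z) • phiW N w₀ w₁ (z • p)).2 + 1 ≠ 0 →
      denW N w₀ w₁ (((1 - z) / z) • phiW N w₀ w₁ (z • p)) ≠ 0 →
      (1 - z) • phiW N w₀ w₁ p
        = phiW N w₀ w₁ (((1 - z) / z) • phiW N w₀ w₁ (z • p))) :=
  univariate_flow_of_quadratic_field_general U V W hW N hN w₀ w₁ hr0 hr1 hwd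
end
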